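/- Let A be a Banach algebra that is (n+2)-weakly amenable, i.e., H^1(A, A^{(n+2)}) = {0}. Then A is n-weakly amenable, i.e., H^1(A, A^{(n)}) = {0}. -/

import Mathlib

open ContinuousLinearMap Filter Topology

namespace Paper

structure Bimod (A : Type*) [NormedRing A] [NormedAlgebra ℂ A]
    (X : Type*) [NormedAddCommGroup X] [NormedSpace ℂ X] where
  l : A → X →L[ℂ] X
  r : A → X →L[ℂ] X
  l_mul : ∀ a b x, l (a * b) x = l a (l b x)
  r_mul : ∀ a b x, r (a * b) x = r b (r a x)
  lr : ∀ a b x, l a (r b x) = r b (l a x)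

variable {A : Type*} [NormedRing A] [NormedAlgebra ℂ A]
variable {X : Type*} [NormedAddCommGroup X] [NormedSpace ℂ X]

noncomputable def Bimod.dual (M : Bimod A X) : Bimod A (X →L[ℂ] ℂ) where
  l a := (compL ℂ X X ℂ).flip (M.r a)
  r a := (compL ℂ X X ℂ).flip (M.l a)
  l_mul a b f := by ext x; simp [M.r_mul]
  r_mul a b f := by ext x; simp [M.l_mul]
  lr a b f := by ext x; simp [M.lr]

def IsDerivation (M : Bimod A X) (D : A →L[ℂ] X) : Prop :=
  ∀ a b, D (a * b) = M.l a (D b) + M.r b (D a)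

def IsInner (M : Bimod A X) (D : A →L[ℂ] X) : Prop :=
  ∃ x, ∀ a, D a = M.l a x - M.r a x

noncomputable def Bimod.restrict (M : Bimod A X) (Y : Submodule ℂ X)
    (hl : ∀ a, ∀ y ∈ Y, M.l a y ∈ Y) (hr : ∀ a, ∀ y ∈ Y, M.r a y ∈ Y) :
    Bimod A Y where
  l a := ((M.l a).comp Y.subtypeL).codRestrict Y fun y => hl a y y.2
  r a := ((M.r a).comp Y.subtypeL).codRestrict Y fun y => hr a y y.2
  l_mul a b y := Subtype.ext (M.l_mul a b y)
  r_mul a b y := Subtype.ext (M.r_mul a b y)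
  lr a b y := Subtype.ext (M.lr a b y)

noncomputable def algBimod (A : Type*) [NormedRing A] [NormedAlgebra ℂ A] : Bimod A A where
  l a := ContinuousLinearMap.mul ℂ A a
  r a := (ContinuousLinearMap.mul ℂ A).flip a
  l_mul a b x := mul_assoc a b x
  r_mul a b x := (mul_assoc x a b).symm
  lr a b x := (mul_assoc a x b).symm

noncomputable def idealBimod (I : Submodule ℂ A)
    (hL : ∀ a, ∀ x ∈ I, a * x ∈ I) (hR : ∀ a, ∀ x ∈ I, x * a ∈ I) :
    Bimod A I where
  l a := ((ContinuousLinearMap.mul ℂ A a).comp I.subtypeL).codRestrict I fun x => hL a x x.2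
  r a := (((ContinuousLinearMap.mul ℂ A).flip a).comp I.subtypeL).codRestrict I fun x => hR a x x.2
  l_mul a b x := Subtype.ext (mul_assoc a b (x : A))
  r_mul a b x := Subtype.ext (mul_assoc (x : A) a b).symm
  lr a b x := Subtype.ext (mul_assoc a (x : A) b).symm

structure BBM (A : Type*) [NormedRing A] [NormedAlgebra ℂ A] where
  carrier : Type*
  [grp : NormedAddCommGroup carrier]
  [mod : NormedSpace ℂ carrier]
  bimod : Bimod A carrier

attribute [instance] BBM.grp BBM.mod

noncomputable def BBM.dual {A : Type*} [NormedRing A] [NormedAlgebra ℂ A]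
    (M : BBM A) : BBM A :=
  { carrier := M.carrier →L[ℂ] ℂ
    bimod := M.bimod.dual }

/-- The Banach algebra $A$ as a Banach $A$-bimodule over itself. -/
noncomputable def algBBM (A : Type*) [NormedRing A] [NormedAlgebra ℂ A] : BBM A :=
  { carrier := A
    bimod := algBimod A }

/-!
For any Banach $A$-bimodule $Y$, the dual $Y^*$ is a bimodule retract of $Y^{***}$: the canonical
embedding $\iota_{Y^*} : Y^* \to Y^{***}$ is split by the transpose $\iota_Y^* : Y^{***} \to Y^*$ of the
embedding $\iota_Y : Y \to Y^{**}$, and both are bimodule maps. Composing a derivation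
$D : A \to Y^*$ with $\iota_{Y^*}$ gives a derivation into $Y^{***}$; if it is implemented by $\Phi$,
then $D$ is implemented by $\iota_Y^*(\Phi)$. Apply this to $Y = A^{(n-1)}$.
-/

section

variable {Z : Type*} [NormedAddCommGroup Z] [NormedSpace ℂ Z]

noncomputable def transpose (f : X →L[ℂ] Z) : (Z →L[ℂ] ℂ) →L[ℂ] (X →L[ℂ] ℂ) :=
  (compL ℂ X Z ℂ).flip f

@[simp]
theorem transpose_apply (f : X →L[ℂ] Z) (φ : Z →L[ℂ] ℂ) (x : X) : transpose f φ x = φ (f x) :=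
  rfl

namespace Bimod

def IsHom (M : Bimod A X) (N : Bimod A Z) (f : X →L[ℂ] Z) : Prop :=
  ∀ a x, f (M.l a x) = N.l a (f x) ∧ f (M.r a x) = N.r a (f x)

variable {M : Bimod A X} {N : Bimod A Z} {f : X →L[ℂ] Z}

theorem IsHom.isDerivation_comp (hf : M.IsHom N f) {D : A →L[ℂ] X} (hD : IsDerivation M D) :
    IsDerivation N (f.comp D) := fun a b => by
  simp only [comp_apply, hD a b, map_add, (hf _ _).1, (hf _ _).2]

theorem IsHom.isInner_comp (hf : M.IsHom N f) {D : A →L[ℂ] X} (hD : IsInner M D) :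
    IsInner N (f.comp D) := by
  obtain ⟨x, hx⟩ := hD
  exact ⟨f x, fun a => by simp only [comp_apply, hx a, map_sub, (hf _ _).1, (hf _ _).2]⟩

theorem forall_isInner_of_retract {i : X →L[ℂ] Z} {p : Z →L[ℂ] X} (hi : M.IsHom N i)
    (hp : N.IsHom M p) (hpi : ∀ x, p (i x) = x)
    (h : ∀ D : A →L[ℂ] Z, IsDerivation N D → IsInner N D) :
    ∀ D : A →L[ℂ] X, IsDerivation M D → IsInner M D := fun D hD => by
  have hD' := hp.isInner_comp (h _ (hi.isDerivation_comp hD))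
  rwa [← comp_assoc, show p.comp i = .id ℂ X from ext hpi, id_comp] at hD'

theorem IsHom.transpose (hf : M.IsHom N f) : N.dual.IsHom M.dual (transpose f) := fun a φ => by
  constructor <;> ext x <;> simp [Bimod.dual, (hf _ _).1, (hf _ _).2]

theorem isHom_inclusionInDoubleDual (M : Bimod A X) :
    M.IsHom M.dual.dual (NormedSpace.inclusionInDoubleDual ℂ X) := fun a x => by
  constructor <;> ext φ <;> simp [Bimod.dual]

section TripleDual

-- Instance search does not find the normed structure of a triple dual without these shortcuts.
noncomputable local instance instNormedAddCommGroupDual (E : Type*) [NormedAddCommGroup E]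
    [NormedSpace ℂ E] : NormedAddCommGroup (E →L[ℂ] ℂ) :=
  ContinuousLinearMap.toNormedAddCommGroup

noncomputable local instance instNormedSpaceDual (E : Type*) [NormedAddCommGroup E]
    [NormedSpace ℂ E] : NormedSpace ℂ (E →L[ℂ] ℂ) :=
  ContinuousLinearMap.toNormedSpace

theorem forall_isInner_dual_of_dual_dual_dual (M : Bimod A X)
    (h : ∀ D : A →L[ℂ] (((X →L[ℂ] ℂ) →L[ℂ] ℂ) →L[ℂ] ℂ),
        IsDerivation M.dual.dual.dual D → IsInner M.dual.dual.dual D) :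
    ∀ D : A →L[ℂ] (X →L[ℂ] ℂ), IsDerivation M.dual D → IsInner M.dual D :=
  forall_isInner_of_retract (isHom_inclusionInDoubleDual M.dual)
    (isHom_inclusionInDoubleDual M).transpose (fun _ => rfl) h

end TripleDual

end Bimod

end

theorem stmt_4
    {A : Type*} [NormedRing A] [NormedAlgebra ℂ A]
    (n : ℕ) (hn : 1 ≤ n)
    (h : ∀ D : A →L[ℂ] (BBM.dual^[n + 2] (algBBM A)).carrier,
        IsDerivation (BBM.dual^[n + 2] (algBBM A)).bimod D →
        IsInner (BBM.dual^[n + 2] (algBBM A)).bimod D) :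
    ∀ D : A →L[ℂ] (BBM.dual^[n] (algBBM A)).carrier,
      IsDerivation (BBM.dual^[n] (algBBM A)).bimod D →
      IsInner (BBM.dual^[n] (algBBM A)).bimod D := by
  obtain ⟨m, rfl⟩ := Nat.exists_eq_add_of_le' hn
  rw [Function.iterate_succ_apply'] at h ⊢
  rw [Function.iterate_succ_apply', Function.iterate_succ_apply'] at h
  exact (BBM.dual^[m] (algBBM A)).bimod.forall_isInner_dual_of_dual_dual_dual h

end Paper
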